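/- arXiv:2510.04445 — 3 statements merged into one kernel-verified Lean document; each statement's English description precedes it below -/
import Mathlib

section
/- Let n ≥ 2 and let a, b ≥ 1 be integers. Then Ã_{a,b} ≠ 0 in the group algebra if and only if 0 < |a − b| < n and a + b > n. -/
open Finset

/-- The alternating sum `Ã(μ) = Σ_{σ ∈ S_n} sign(σ)·X^{σ·μ}` in the group
algebra `AddMonoidAlgebra ℤ (Fin n → ℤ)`, where `(σ·μ)_i = μ_{σ⁻¹(i)}`. -/
noncomputable def Atilde (n : ℕ) (μ : Fin n → ℤ) : AddMonoidAlgebra ℤ (Fin n → ℤ) :=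
  ∑ σ : Equiv.Perm (Fin n),
    (Equiv.Perm.sign σ : ℤ) • AddMonoidAlgebra.single (fun i => μ (σ⁻¹ i)) 1

/-- The staircase tuple `ρ̃ = (n−1, n−2, …, 1, 0)`. -/
def rhoT (n : ℕ) : Fin n → ℤ := fun i => (n : ℤ) - 1 - (i : ℤ)

/-- `Ã_{a,b} = Σ Ã(ρ̃ − a(e_u − e_v))` over ordered pairs `u ≠ v` with
`v − u = a − b` (the roots of `sl_n` of height `a − b`). -/
noncomputable def AtildeAB (n : ℕ) (a b : ℕ) : AddMonoidAlgebra ℤ (Fin n → ℤ) :=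
  ∑ uv : Fin n × Fin n,
    if uv.1 ≠ uv.2 ∧ ((uv.2 : ℤ) - (uv.1 : ℤ) = (a : ℤ) - (b : ℤ)) then
      Atilde n (rhoT n - (a : ℤ) • (Pi.single uv.1 1 - Pi.single uv.2 1))
    else 0

/-!
`Ã(μ)` vanishes as soon as `μ` has a repeated entry (pair `σ` with `σ * swap i j`), and for
injective `μ` its coefficient at `X^μ` is `1`. For `μ = ρ̃ − a(e_u − e_v)` with `v − u = a − b`,
the entry `μ_u` coincides with `ρ̃_{u+a}` unless `u + a ≥ n`, and `μ_v` coincides with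
`ρ̃_{u−b}` unless `u < b`; when both fail, `μ` is injective and its unique negative entry
`n − 1 − u − a` sits at `u`. Distinct surviving summands therefore have distinct negative
entries, so none of them can cancel the coefficient `1` of another. Hence `Ã_{a,b} ≠ 0`
exactly when `a ≠ b` and some `u` with `n − a ≤ u < b` and `0 ≤ u + a − b < n` exists, which
unwinds to `|a − b| < n` and `a + b > n`.
-/

section Alternant

variable {n : ℕ}

lemma coeff_Atilde (μ ν : Fin n → ℤ) :
    (Atilde n μ).coeff ν = ∑ σ : Equiv.Perm (Fin n),
      if (fun i => μ (σ⁻¹ i)) = ν then (Equiv.Perm.sign σ : ℤ) else 0 := by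
  simp [Atilde, AddMonoidAlgebra.coeff_single, Finsupp.single_apply]

lemma coeff_Atilde_self {μ : Fin n → ℤ} (hμ : Function.Injective μ) :
    (Atilde n μ).coeff μ = 1 := by
  rw [coeff_Atilde, Finset.sum_eq_single 1]
  · simp
  · refine fun σ _ hσ => if_neg fun h => hσ ?_
    rw [← inv_eq_one]
    exact Equiv.ext fun i => hμ (congrFun h i)
  · simp

lemma coeff_Atilde_eq_zero {μ ν : Fin n → ℤ} (i : Fin n) (hi : ν i ∉ Set.range μ) :
    (Atilde n μ).coeff ν = 0 := by
  rw [coeff_Atilde]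
  exact Finset.sum_eq_zero fun σ _ => if_neg fun h => hi ⟨σ⁻¹ i, congrFun h i⟩

lemma Atilde_eq_zero_of_not_injective {μ : Fin n → ℤ} (hμ : ¬Function.Injective μ) :
    Atilde n μ = 0 := by
  obtain ⟨i, j, hμij, hij⟩ : ∃ i j, μ i = μ j ∧ i ≠ j := by
    simpa [Function.Injective] using hμ
  have hμ_swap : ∀ k, μ (Equiv.swap i j k) = μ k := fun k => by
    rw [Equiv.swap_apply_def]; split_ifs <;> simp_all
  refine Finset.sum_involution (fun σ _ => σ * Equiv.swap i j) (fun σ _ => ?_)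
    (fun σ _ _ => by simpa using hij) (fun _ _ => mem_univ _) (fun σ _ => by simp [mul_assoc])
  simp only [mul_inv_rev, Equiv.swap_inv, Equiv.Perm.mul_apply, hμ_swap,
    Equiv.Perm.sign_mul, Equiv.Perm.sign_swap hij]
  simp

end Alternant

def shiftedRho (n a : ℕ) (u v : Fin n) : Fin n → ℤ :=
  rhoT n - (a : ℤ) • (Pi.single u 1 - Pi.single v 1)

section ShiftedRho

variable {n a : ℕ} {u v : Fin n}

lemma shiftedRho_apply (huv : u ≠ v) (i : Fin n) :
    shiftedRho n a u v i =
      if i = u then (n : ℤ) - 1 - i - a else if i = v then (n : ℤ) - 1 - i + a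
        else (n : ℤ) - 1 - i := by
  rcases eq_or_ne i u with rfl | hu
  · simp [shiftedRho, rhoT, huv]
  rcases eq_or_ne i v with rfl | hv
  · simp [shiftedRho, rhoT, hu]
  · simp [shiftedRho, rhoT, hu, hv]

lemma shiftedRho_apply_nonneg (huv : u ≠ v) {i : Fin n} (hi : i ≠ u) :
    0 ≤ shiftedRho n a u v i := by
  rw [shiftedRho_apply huv, if_neg hi]
  have := i.isLt
  split_ifs <;> omega

lemma shiftedRho_injective (huv : u ≠ v) (hu : n ≤ u + a) (hv : (v : ℕ) < a) :
    Function.Injective (shiftedRho n a u v) := by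
  intro i j hij
  rw [shiftedRho_apply huv, shiftedRho_apply huv] at hij
  have := i.isLt
  have := j.isLt
  split_ifs at hij <;> simp_all [Fin.ext_iff] <;> omega

end ShiftedRho

section AtildeAB

variable {n a b : ℕ} {u v : Fin n}

lemma Atilde_shiftedRho_eq_zero (ha : 1 ≤ a) (hb : 1 ≤ b) (huv : u ≠ v)
    (hvu : (v : ℤ) - u = a - b) (h : u + a < n ∨ b ≤ u) :
    Atilde n (shiftedRho n a u v) = 0 := by
  refine Atilde_eq_zero_of_not_injective fun hinj => ?_
  rcases h with h | h
  · -- the entry at `u` is lowered onto `ρ̃_{u+a}`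
    let w : Fin n := ⟨u + a, h⟩
    have hwu : w ≠ u := Fin.ne_of_val_ne (by dsimp only [w]; omega)
    have hwv : w ≠ v := Fin.ne_of_val_ne (by dsimp only [w]; omega)
    refine hwu (hinj ?_)
    rw [shiftedRho_apply huv, shiftedRho_apply huv, if_neg hwu, if_neg hwv, if_pos rfl]
    simp only [w]
    push_cast
    ring
  · -- the entry at `v` is raised onto `ρ̃_{u-b}`
    let w : Fin n := ⟨u - b, by omega⟩
    have hwu : w ≠ u := Fin.ne_of_val_ne (by dsimp only [w]; omega)
    have hwv : w ≠ v := Fin.ne_of_val_ne (by dsimp only [w]; omega)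
    refine hwv (hinj ?_)
    rw [shiftedRho_apply huv, shiftedRho_apply huv, if_neg hwu, if_neg hwv, if_neg huv.symm,
      if_pos rfl]
    simp only [w]
    omega

lemma coeff_AtildeAB_shiftedRho {u₀ v₀ : Fin n} (huv₀ : u₀ ≠ v₀) (hvu₀ : (v₀ : ℤ) - u₀ = a - b)
    (hu₀ : n ≤ u₀ + a) (hv₀ : (v₀ : ℕ) < a) :
    (AtildeAB n a b).coeff (shiftedRho n a u₀ v₀) = 1 := by
  rw [AtildeAB, AddMonoidAlgebra.coeff_sum, Finsupp.finsetSum_apply,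
    Finset.sum_eq_single (u₀, v₀)]
  · rw [if_pos ⟨huv₀, hvu₀⟩]
    exact coeff_Atilde_self (shiftedRho_injective huv₀ hu₀ hv₀)
  · rintro ⟨u, v⟩ - hne
    dsimp only
    split_ifs with h
    · obtain ⟨huv, hvu⟩ := h
      have hu : u ≠ u₀ := by
        rintro rfl
        obtain rfl : v = v₀ := Fin.ext (by omega)
        exact hne rfl
      -- the only negative entry of `shiftedRho n a u v` sits at `u`
      refine coeff_Atilde_eq_zero (μ := shiftedRho n a u v) u₀ fun ⟨i, hi⟩ => ?_
      have hneg : shiftedRho n a u v i < 0 := by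
        rw [hi, shiftedRho_apply huv₀, if_pos rfl]; omega
      obtain rfl : i = u := by
        by_contra hiu
        exact (shiftedRho_apply_nonneg huv hiu).not_gt hneg
      rw [shiftedRho_apply huv₀, shiftedRho_apply huv, if_pos rfl, if_pos rfl] at hi
      exact hu (Fin.ext (by omega))
    · simp
  · simp

end AtildeAB

theorem stmt10_general (n : ℕ) (a b : ℕ) (ha : 1 ≤ a) (hb : 1 ≤ b) :
    AtildeAB n a b ≠ 0 ↔
      (0 < |(a : ℤ) - (b : ℤ)| ∧ |(a : ℤ) - (b : ℤ)| < (n : ℤ) ∧ n < a + b) := by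
  rw [abs_pos, abs_lt, sub_ne_zero]
  constructor
  · intro hne
    obtain ⟨⟨u, v⟩, -, hterm⟩ := Finset.exists_ne_zero_of_sum_ne_zero hne
    dsimp only at hterm
    split_ifs at hterm with h
    · obtain ⟨huv, hvu⟩ := h
      have hu := u.isLt
      have hv := v.isLt
      have : n ≤ u + a ∧ u < b := by
        by_contra h
        exact hterm (Atilde_shiftedRho_eq_zero ha hb huv hvu (by omega))
      exact ⟨fun hab => huv (Fin.ext (by omega)), ⟨by omega, by omega⟩, by omega⟩
    · exact absurd rfl hterm
  · rintro ⟨hab, ⟨hgt, hlt⟩, hsum⟩ h0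
    obtain ⟨u₀, hu₀n, hu₀a, hu₀b, hv₀, hv₀n⟩ :
        ∃ u₀, u₀ < n ∧ n ≤ u₀ + a ∧ u₀ < b ∧ b ≤ u₀ + a ∧ u₀ + a - b < n :=
      ⟨max (n - a) (b - a), by omega⟩
    have hcoeff := coeff_AtildeAB_shiftedRho (a := a) (b := b) (u₀ := ⟨u₀, hu₀n⟩)
      (v₀ := ⟨u₀ + a - b, hv₀n⟩) (Fin.ne_of_val_ne (by dsimp only; omega))
      (by dsimp only; omega) (by dsimp only; omega) (by dsimp only; omega)
    simp [h0] at hcoeff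

/-- Lemma 4.5 of the paper.
For `n ≥ 2` and integers `a, b ≥ 1`, `Ã_{a,b} ≠ 0` in the group algebra if and
only if `0 < |a − b| < n` and `a + b > n`. -/
theorem stmt10 (n : ℕ) (hn : 2 ≤ n) (a b : ℕ) (ha : 1 ≤ a) (hb : 1 ≤ b) :
    AtildeAB n a b ≠ 0 ↔
      (0 < |(a : ℤ) - (b : ℤ)| ∧ |(a : ℤ) - (b : ℤ)| < (n : ℤ) ∧ n < a + b) :=
  stmt10_general n a b ha hb
end

section
/- Let n ≥ 4. For all integers a, b ≥ 1 one has Ã^D_{a,b} = −Ã^D_{b,a} in the group algebra. (This is the type-D instance of the identity E_{a,b} = −E_{b,a} for a simply-laced root system.) -/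
open Finset

/-- The group `W_D` of even-signed permutations on `n` letters: pairs
`g = (σ, ε)` with `σ ∈ S_n` and `ε : Fin n → {±1}` satisfying
`ε_1⋯ε_n = 1` (the Weyl group of type `D_n`). -/
abbrev WD (n : ℕ) := {g : Equiv.Perm (Fin n) × (Fin n → ℤˣ) // (∏ i, g.2 i) = 1}

/-- The action of `g = (σ, ε) ∈ W_D` on tuples: `(g·μ)_i = ε_i · μ_{σ⁻¹(i)}`. -/
def WDact (n : ℕ) (g : WD n) (μ : Fin n → ℤ) : Fin n → ℤ :=
  fun i => ((g.1.2 i : ℤ)) * μ (g.1.1⁻¹ i)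

/-- The alternating sum `Ã_D(μ) = Σ_{g ∈ W_D} sgn(g)·X^{g·μ}` in the group
algebra `AddMonoidAlgebra ℤ (Fin n → ℤ)`, with `sgn(σ, ε) = sign σ`. -/
noncomputable def AtildeD (n : ℕ) (μ : Fin n → ℤ) : AddMonoidAlgebra ℤ (Fin n → ℤ) :=
  ∑ g : WD n, (Equiv.Perm.sign g.1.1 : ℤ) • AddMonoidAlgebra.single (WDact n g μ) 1

/-- `Ã^D_{a,b} = Σ_{α root of D_n, ht(α) = a − b} Ã_D(ρ̃ − a·α)`, where the
roots of `D_n` are `s(e_i − e_j)` and `s(e_i + e_j)` for `s ∈ {±1}`,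
`1 ≤ i < j ≤ n` (here `0`-indexed), with heights `s(j − i)` and
`s(2n − i − j)` (`1`-indexed) respectively. -/
noncomputable def AtildeDab (n : ℕ) (a b : ℕ) : AddMonoidAlgebra ℤ (Fin n → ℤ) :=
  ∑ ij : Fin n × Fin n, ∑ s ∈ ({1, -1} : Finset ℤ),
    ((if ij.1 < ij.2 ∧ s * ((ij.2 : ℤ) - (ij.1 : ℤ)) = (a : ℤ) - (b : ℤ) then
        AtildeD n (rhoT n -
          (a : ℤ) • (s • (Pi.single ij.1 (1 : ℤ) - Pi.single ij.2 (1 : ℤ))))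
      else 0) +
    (if ij.1 < ij.2 ∧
        s * (2 * (n : ℤ) - ((ij.1 : ℤ) + 1) - ((ij.2 : ℤ) + 1)) = (a : ℤ) - (b : ℤ) then
        AtildeD n (rhoT n -
          (a : ℤ) • (s • (Pi.single ij.1 (1 : ℤ) + Pi.single ij.2 (1 : ℤ))))
      else 0))

def WDmul (n : ℕ) (g h : WD n) : WD n :=
  ⟨(g.1.1 * h.1.1, fun i => g.1.2 i * h.1.2 (g.1.1⁻¹ i)), by
    rw [Finset.prod_mul_distrib, g.2, Equiv.prod_comp g.1.1⁻¹ h.1.2, h.2, one_mul]⟩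

def WDinv (n : ℕ) (g : WD n) : WD n :=
  ⟨(g.1.1⁻¹, fun i => g.1.2 (g.1.1 i)), by rw [Equiv.prod_comp g.1.1 g.1.2]; exact g.2⟩

lemma WDact_mul (n : ℕ) (g h : WD n) (μ : Fin n → ℤ) :
    WDact n (WDmul n g h) μ = WDact n g (WDact n h μ) := by
  funext i
  simp [WDact, WDmul, mul_assoc, mul_inv_rev]

lemma WDmul_inv_cancel (n : ℕ) (g h : WD n) : WDmul n (WDmul n g h) (WDinv n h) = g := by
  apply Subtype.ext
  apply Prod.ext
  · simp [WDmul, WDinv]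
  · funext i
    simp [WDmul, WDinv, mul_assoc, mul_inv_rev, Int.units_mul_self]

lemma WDinv_mul_cancel (n : ℕ) (g h : WD n) : WDmul n (WDmul n g (WDinv n h)) h = g := by
  apply Subtype.ext
  apply Prod.ext
  · simp [WDmul, WDinv]
  · funext i
    simp [WDmul, WDinv, mul_assoc, mul_inv_rev, Int.units_mul_self]

lemma atildeD_act (n : ℕ) (g : WD n) (μ : Fin n → ℤ) :
    AtildeD n (WDact n g μ) = (Equiv.Perm.sign g.1.1 : ℤ) • AtildeD n μ := by
  unfold AtildeD
  rw [Finset.smul_sum]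
  refine Fintype.sum_bijective (fun h => WDmul n h g)
    (Function.bijective_iff_has_inverse.mpr
      ⟨fun h => WDmul n h (WDinv n g), fun h => WDmul_inv_cancel n h g,
        fun h => WDinv_mul_cancel n h g⟩)
    _ _ (fun h => ?_)
  rw [← WDact_mul]
  show _ = (Equiv.Perm.sign g.1.1 : ℤ) •
    ((Equiv.Perm.sign (WDmul n h g).1.1 : ℤ) • AddMonoidAlgebra.single (WDact n (WDmul n h g) μ) 1)
  rw [smul_smul]
  congr 1
  show _ = (Equiv.Perm.sign g.1.1 : ℤ) * (Equiv.Perm.sign (h.1.1 * g.1.1) : ℤ)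
  rw [map_mul]
  push_cast
  rcases Int.units_eq_one_or (Equiv.Perm.sign g.1.1) with hg | hg <;>
    rcases Int.units_eq_one_or (Equiv.Perm.sign h.1.1) with hh | hh <;>
      rw [hg, hh] <;> norm_num

def rswap (n : ℕ) (i j : Fin n) : WD n := ⟨(Equiv.swap i j, 1), by simp⟩

def rflip (n : ℕ) (i j : Fin n) : WD n :=
  ⟨(Equiv.swap i j, fun k => (if k = i then -1 else 1) * (if k = j then -1 else 1)), by
    rw [Finset.prod_mul_distrib]
    rw [Finset.prod_ite_eq' Finset.univ i (fun _ => (-1 : ℤˣ)),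
      Finset.prod_ite_eq' Finset.univ j (fun _ => (-1 : ℤˣ))]
    simp⟩

lemma keyMinus (n : ℕ) (a b : ℕ) (i j : Fin n) (hij : i < j) (s t : ℤ)
    (hs : s = 1 ∨ s = -1) (hst : t = -s)
    (h : s * ((j : ℤ) - (i : ℤ)) = (a : ℤ) - (b : ℤ)) :
    AtildeD n (rhoT n - (a : ℤ) • (s • (Pi.single i (1 : ℤ) - Pi.single j (1 : ℤ)))) =
    - AtildeD n (rhoT n - (b : ℤ) • (t • (Pi.single i (1 : ℤ) - Pi.single j (1 : ℤ)))) := by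
  have hne : i ≠ j := hij.ne
  have hvec : rhoT n - (b : ℤ) • (t • (Pi.single i (1 : ℤ) - Pi.single j (1 : ℤ))) =
      WDact n (rswap n i j)
        (rhoT n - (a : ℤ) • (s • (Pi.single i (1 : ℤ) - Pi.single j (1 : ℤ)))) := by
    funext k
    have hij' : (i : ℤ) < (j : ℤ) := by exact_mod_cast hij
    simp only [WDact, rswap, Equiv.swap_inv, Pi.sub_apply, Pi.smul_apply, smul_eq_mul,
      Pi.single_apply, Pi.one_apply, Units.val_one, one_mul, rhoT, hst]
    rcases eq_or_ne k i with rfl | hki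
    · rw [Equiv.swap_apply_left]
      simp only [if_pos rfl, if_neg hne, if_neg hne.symm, if_pos rfl]
      rcases hs with rfl | rfl <;> push_cast at h ⊢ <;> linarith
    · rcases eq_or_ne k j with rfl | hkj
      · rw [Equiv.swap_apply_right]
        simp only [if_pos rfl, if_neg hne, if_neg hne.symm]
        rcases hs with rfl | rfl <;> push_cast at h ⊢ <;> linarith
      · rw [Equiv.swap_apply_of_ne_of_ne hki hkj]
        simp [if_neg hki, if_neg hkj]
  rw [hvec, atildeD_act]
  simp [rswap, Equiv.Perm.sign_swap hne]

lemma keyPlus (n : ℕ) (a b : ℕ) (i j : Fin n) (hij : i < j) (s t : ℤ)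
    (hs : s = 1 ∨ s = -1) (hst : t = -s)
    (h : s * (2 * (n : ℤ) - ((i : ℤ) + 1) - ((j : ℤ) + 1)) = (a : ℤ) - (b : ℤ)) :
    AtildeD n (rhoT n - (a : ℤ) • (s • (Pi.single i (1 : ℤ) + Pi.single j (1 : ℤ)))) =
    - AtildeD n (rhoT n - (b : ℤ) • (t • (Pi.single i (1 : ℤ) + Pi.single j (1 : ℤ)))) := by
  have hne : i ≠ j := hij.ne
  have hvec : rhoT n - (b : ℤ) • (t • (Pi.single i (1 : ℤ) + Pi.single j (1 : ℤ))) =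
      WDact n (rflip n i j)
        (rhoT n - (a : ℤ) • (s • (Pi.single i (1 : ℤ) + Pi.single j (1 : ℤ)))) := by
    funext k
    simp only [WDact, rflip, Equiv.swap_inv, Pi.sub_apply, Pi.add_apply, Pi.smul_apply,
      smul_eq_mul, Pi.single_apply, rhoT, hst, Units.val_mul]
    rcases eq_or_ne k i with rfl | hki
    · rw [Equiv.swap_apply_left]
      simp only [if_pos rfl, if_neg hne, if_neg hne.symm]
      rcases hs with rfl | rfl <;> push_cast at h ⊢ <;> linarith
    · rcases eq_or_ne k j with rfl | hkj
      · rw [Equiv.swap_apply_right]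
        simp only [if_pos rfl, if_neg hne, if_neg hne.symm]
        rcases hs with rfl | rfl <;> push_cast at h ⊢ <;> linarith
      · rw [Equiv.swap_apply_of_ne_of_ne hki hkj]
        simp [if_neg hki, if_neg hkj]
  rw [hvec, atildeD_act]
  simp [rflip, Equiv.Perm.sign_swap hne]

lemma pairMinus (n a b : ℕ) (i j : Fin n) (s t : ℤ) (hs : s = 1 ∨ s = -1) (hst : t = -s) :
    (if i < j ∧ s * ((j : ℤ) - (i : ℤ)) = (a : ℤ) - (b : ℤ) then
        AtildeD n (rhoT n - (a : ℤ) • (s • (Pi.single i (1 : ℤ) - Pi.single j (1 : ℤ))))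
      else 0) =
    - (if i < j ∧ t * ((j : ℤ) - (i : ℤ)) = (b : ℤ) - (a : ℤ) then
        AtildeD n (rhoT n - (b : ℤ) • (t • (Pi.single i (1 : ℤ) - Pi.single j (1 : ℤ))))
      else 0) := by
  by_cases hc : i < j ∧ s * ((j : ℤ) - (i : ℤ)) = (a : ℤ) - (b : ℤ)
  · rw [if_pos hc, if_pos ⟨hc.1, by rw [hst]; linarith [hc.2]⟩,
      keyMinus n a b i j hc.1 s t hs hst hc.2]
  · rw [if_neg hc, if_neg (fun h' => hc ⟨h'.1, by
      have := h'.2; rw [hst] at this; linarith⟩), neg_zero]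

lemma pairPlus (n a b : ℕ) (i j : Fin n) (s t : ℤ) (hs : s = 1 ∨ s = -1) (hst : t = -s) :
    (if i < j ∧ s * (2 * (n : ℤ) - ((i : ℤ) + 1) - ((j : ℤ) + 1)) = (a : ℤ) - (b : ℤ) then
        AtildeD n (rhoT n - (a : ℤ) • (s • (Pi.single i (1 : ℤ) + Pi.single j (1 : ℤ))))
      else 0) =
    - (if i < j ∧ t * (2 * (n : ℤ) - ((i : ℤ) + 1) - ((j : ℤ) + 1)) = (b : ℤ) - (a : ℤ) then
        AtildeD n (rhoT n - (b : ℤ) • (t • (Pi.single i (1 : ℤ) + Pi.single j (1 : ℤ))))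
      else 0) := by
  by_cases hc : i < j ∧ s * (2 * (n : ℤ) - ((i : ℤ) + 1) - ((j : ℤ) + 1)) = (a : ℤ) - (b : ℤ)
  · rw [if_pos hc, if_pos ⟨hc.1, by rw [hst]; linarith [hc.2]⟩,
      keyPlus n a b i j hc.1 s t hs hst hc.2]
  · rw [if_neg hc, if_neg (fun h' => hc ⟨h'.1, by
      have := h'.2; rw [hst] at this; linarith⟩), neg_zero]

/-- Lemma 3.5 of the paper, type `D`.
For `n ≥ 4` and integers `a, b ≥ 1`, `Ã^D_{a,b} = −Ã^D_{b,a}` in the group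
algebra. -/
theorem stmt17 (n : ℕ) (hn : 4 ≤ n) (a b : ℕ) (ha : 1 ≤ a) (hb : 1 ≤ b) :
    AtildeDab n a b = - AtildeDab n b a := by
  unfold AtildeDab
  rw [← Finset.sum_neg_distrib]
  refine Finset.sum_congr rfl fun ij _ => ?_
  have hone : (1 : ℤ) ≠ -1 := by norm_num
  rw [Finset.sum_pair hone, Finset.sum_pair hone]
  rw [pairMinus n a b ij.1 ij.2 1 (-1) (Or.inl rfl) (by norm_num),
    pairPlus n a b ij.1 ij.2 1 (-1) (Or.inl rfl) (by norm_num),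
    pairMinus n a b ij.1 ij.2 (-1) 1 (Or.inr rfl) (by norm_num),
    pairPlus n a b ij.1 ij.2 (-1) 1 (Or.inr rfl) (by norm_num)]
  abel
end

section
/- Let n ≥ 4. For every pair of integers (a, b) with a + b > 2n and 1 ≤ b − a ≤ 2n − 3, the set R_{a,b} is nonempty and Y_{a,b} ≠ 0 in the group algebra; moreover, the family of elements {Y_{a,b}}, indexed by all pairs (a, b) of positive integers with a + b > 2n and 1 ≤ b − a ≤ 2n − 3, is linearly independent over ℤ. -/
/-!
For admissible `(a, b)` choose a root `−(e_i + e_j) ∈ R_{a,b}` and put `μ = ρ̃ + a(e_i + e_j)`.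
The absolute values of the coordinates of `μ` are pairwise distinct, so the stabiliser of `μ` in
`W_D` is trivial and `X^μ` occurs in `Ã_D(μ)` with coefficient `1`. The set of absolute values is
a `W_D`-invariant, and it recovers `(a, i, j)` from any weight `ρ̃ − a'α'` occurring in some
`Y_{a',b'}`, except for one coincidence with a root `−(e_i − e_j)`, which the sign of the product
of the coordinates (also `W_D`-invariant) rules out. Thus the coefficient of `X^μ` in `Y_{a',b'}`
is `δ_{(a,b),(a',b')}`, which gives both the nonvanishing and the linear independence.
-/

open Finset

/-- `Y_{a,b} = Σ_{α ∈ R_{a,b}} Ã_D(ρ̃ − a·α)`, where `R_{a,b}` consists of the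
negative roots `−(e_i + e_j)` with `i < j` (1-indexed), `(i + j) − 2n = a − b`,
`j ≤ a`, together with the negative roots `−(e_i − e_j)` with `i < j`,
`j − i = b − a`, `j ≥ 2n − a` (indices `0`-indexed in the formalization). -/
noncomputable def YD (n : ℕ) (a b : ℕ) : AddMonoidAlgebra ℤ (Fin n → ℤ) :=
  ∑ ij : Fin n × Fin n,
    ((if ij.1 < ij.2 ∧
        ((ij.1 : ℤ) + 1) + ((ij.2 : ℤ) + 1) - 2 * n = (a : ℤ) - (b : ℤ) ∧
        (ij.2 : ℤ) + 1 ≤ (a : ℤ) then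
        AtildeD n (rhoT n + (a : ℤ) • (Pi.single ij.1 (1 : ℤ) + Pi.single ij.2 (1 : ℤ)))
      else 0) +
    (if ij.1 < ij.2 ∧
        (ij.2 : ℤ) - (ij.1 : ℤ) = (b : ℤ) - (a : ℤ) ∧
        2 * (n : ℤ) - (a : ℤ) ≤ (ij.2 : ℤ) + 1 then
        AtildeD n (rhoT n + (a : ℤ) • (Pi.single ij.1 (1 : ℤ) - Pi.single ij.2 (1 : ℤ)))
      else 0))

section WeylGroup

variable {n : ℕ}

lemma abs_WDact_apply (g : WD n) (μ : Fin n → ℤ) (k : Fin n) :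
    |WDact n g μ k| = |μ (g.1.1⁻¹ k)| := by
  rcases Int.units_eq_one_or (g.1.2 k) with h | h <;> simp [WDact, h]

lemma range_abs_WDact (g : WD n) (μ : Fin n → ℤ) :
    Set.range (fun k => |WDact n g μ k|) = Set.range (fun k => |μ k|) := by
  simp_rw [abs_WDact_apply]
  exact (g.1.1⁻¹).surjective.range_comp fun k => |μ k|

lemma prod_WDact (g : WD n) (μ : Fin n → ℤ) : ∏ k, WDact n g μ k = ∏ k, μ k := by
  have hε : ∏ k, (g.1.2 k : ℤ) = 1 := by
    simpa using congrArg (Units.coeHom ℤ) g.2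
  simp only [WDact, prod_mul_distrib, hε, one_mul]
  exact Equiv.prod_comp g.1.1⁻¹ μ

lemma WDact_one (μ : Fin n → ℤ) : WDact n ⟨1, by simp⟩ μ = μ := by
  funext k
  simp [WDact]

lemma eq_one_of_WDact_eq_self {μ : Fin n → ℤ} (hμ : Function.Injective fun k => |μ k|)
    {g : WD n} (hg : WDact n g μ = μ) : g = ⟨1, by simp⟩ := by
  have hσ : g.1.1 = 1 := by
    refine inv_eq_one.mp (Equiv.ext fun k => hμ ?_)
    simpa [abs_WDact_apply] using congrArg (fun ν => |ν k|) hg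
  have hε : ∀ k, μ k ≠ 0 → g.1.2 k = 1 := fun k hk => by
    have hk' : (g.1.2 k : ℤ) * μ k = μ k := by simpa [WDact, hσ] using congrFun hg k
    rcases Int.units_eq_one_or (g.1.2 k) with h | h
    · exact h
    · simp [h] at hk'; omega
  -- at most one coordinate vanishes, and there `ε = 1` is forced by `∏ ε = 1`
  have hε' : ∀ k, g.1.2 k = 1 := fun k => by
    by_cases hk : μ k = 0
    · have hothers : ∀ m, m ≠ k → g.1.2 m = 1 := fun m hm =>
        hε m fun h0 => hm (hμ (by simp [h0, hk]))
      simpa [Fintype.prod_eq_single k hothers] using g.2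
    · exact hε k hk
  exact Subtype.ext (Prod.ext hσ (funext hε'))

lemma coeff_AtildeD (μ ν : Fin n → ℤ) :
    (AtildeD n μ).coeff ν = ∑ g : WD n with WDact n g μ = ν, (Equiv.Perm.sign g.1.1 : ℤ) := by
  simp [AtildeD, AddMonoidAlgebra.coeff_sum, Finsupp.finsetSum_apply, Finsupp.single_apply,
    sum_filter]

lemma coeff_AtildeD_eq_zero {μ ν : Fin n → ℤ} (h : ∀ g : WD n, WDact n g μ ≠ ν) :
    (AtildeD n μ).coeff ν = 0 := by
  rw [coeff_AtildeD, sum_eq_zero]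
  intro g hg
  exact absurd (mem_filter.mp hg).2 (h g)

lemma coeff_AtildeD_self {μ : Fin n → ℤ} (hμ : Function.Injective fun k => |μ k|) :
    (AtildeD n μ).coeff μ = 1 := by
  have hstab : ({g : WD n | WDact n g μ = μ} : Finset (WD n)) = {⟨1, by simp⟩} := by
    ext g
    simp only [mem_filter, mem_univ, true_and, mem_singleton]
    exact ⟨eq_one_of_WDact_eq_self hμ, fun h => h ▸ WDact_one μ⟩
  simp [coeff_AtildeD, hstab]

end WeylGroup

section Perturbation

variable {n : ℕ} {μ ν : Fin n → ℤ} {i j i' j' : Fin n}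

lemma mem_range_abs_iff (hμ : ∀ k, k ≠ i → k ≠ j → μ k = rhoT n k) (c : ℤ) :
    c ∈ Set.range (fun k => |μ k|) ↔ c = |μ i| ∨ c = |μ j| ∨
      (0 ≤ c ∧ c < n ∧ c ≠ n - 1 - i ∧ c ≠ n - 1 - j) := by
  constructor
  · rintro ⟨k, rfl⟩
    by_cases hki : k = i
    · exact .inl (by rw [hki])
    by_cases hkj : k = j
    · exact .inr (.inl (by rw [hkj]))
    have := k.isLt
    have hki' : (k : ℕ) ≠ i := Fin.val_ne_of_ne hki
    have hkj' : (k : ℕ) ≠ j := Fin.val_ne_of_ne hkj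
    simp only [hμ k hki hkj, rhoT]
    rw [abs_of_nonneg (by omega)]
    omega
  · rintro (rfl | rfl | ⟨hc0, hcn, hci, hcj⟩)
    · exact ⟨i, rfl⟩
    · exact ⟨j, rfl⟩
    · have hk : (n - 1 - c).toNat < n := by omega
      set k : Fin n := ⟨(n - 1 - c).toNat, hk⟩
      have hkval : (k : ℤ) = n - 1 - c := by simp only [k]; omega
      have hki : k ≠ i := fun h => hci (by rw [← h]; omega)
      have hkj : k ≠ j := fun h => hcj (by rw [← h]; omega)
      refine ⟨k, ?_⟩
      simp only [hμ k hki hkj, rhoT]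
      rw [abs_of_nonneg (by omega)]
      omega

/-- The absolute values of the coordinates are a `W_D`-invariant; the values below `n` that are
missing locate the perturbed coordinates. -/
lemma eq_of_WDact_eq (hμ : ∀ k, k ≠ i → k ≠ j → μ k = rhoT n k)
    (hν : ∀ k, k ≠ i' → k ≠ j' → ν k = rhoT n k) (hij : i < j) (hij' : i' < j')
    (hi : n ≤ |μ i|) (hj : n ≤ |μ j|) (hi' : n ≤ |ν i'|) (hj' : n ≤ |ν j'|)
    {g : WD n} (hg : WDact n g ν = μ) :
    i' = i ∧ j' = j ∧
      (|ν i'| = |μ i| ∧ |ν j'| = |μ j| ∨ |ν i'| = |μ j| ∧ |ν j'| = |μ i|) := by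
  have hrange : Set.range (fun k => |μ k|) = Set.range (fun k => |ν k|) :=
    hg ▸ range_abs_WDact g ν
  have K (c : ℤ) := (mem_range_abs_iff hμ c).symm.trans <|
    (Set.ext_iff.mp hrange c).trans (mem_range_abs_iff hν c)
  have := j.isLt; have := j'.isLt
  have : (i : ℕ) < j := hij
  have : (i' : ℕ) < j' := hij'
  obtain ⟨rfl, rfl⟩ : i' = i ∧ j' = j := by
    have := K (n - 1 - i); have := K (n - 1 - j)
    exact ⟨Fin.ext (by omega), Fin.ext (by omega)⟩
  have := K |μ i'|; have := K |μ j'|; have := K |ν i'|; have := K |ν j'|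
  exact ⟨rfl, rfl, by omega⟩

end Perturbation

section Weights

variable {n a a' : ℕ} {i j i' j' : Fin n}

/-- The weight `ρ̃ − a·α` for the negative root `α = −(e_i + e_j)`. -/
def muPlus (n a : ℕ) (i j : Fin n) : Fin n → ℤ :=
  rhoT n + (a : ℤ) • (Pi.single i 1 + Pi.single j 1)

/-- The weight `ρ̃ − a·α` for the negative root `α = −(e_i − e_j)`. -/
def muMinus (n a : ℕ) (i j : Fin n) : Fin n → ℤ :=
  rhoT n + (a : ℤ) • (Pi.single i 1 - Pi.single j 1)

lemma muPlus_apply (k : Fin n) :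
    muPlus n a i j k =
      n - 1 - k + (if k = i then (a : ℤ) else 0) + (if k = j then (a : ℤ) else 0) := by
  simp only [muPlus, rhoT, Pi.add_apply, Pi.smul_apply, Pi.single_apply, smul_eq_mul]
  split_ifs <;> ring

lemma muMinus_apply (k : Fin n) :
    muMinus n a i j k =
      n - 1 - k + (if k = i then (a : ℤ) else 0) - (if k = j then (a : ℤ) else 0) := by
  simp only [muMinus, rhoT, Pi.add_apply, Pi.sub_apply, Pi.smul_apply, Pi.single_apply,
    smul_eq_mul]
  split_ifs <;> ring

lemma muPlus_eq_rhoT {k : Fin n} (hki : k ≠ i) (hkj : k ≠ j) : muPlus n a i j k = rhoT n k := by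
  simp [muPlus_apply, hki, hkj, rhoT]

lemma muMinus_eq_rhoT {k : Fin n} (hki : k ≠ i) (hkj : k ≠ j) : muMinus n a i j k = rhoT n k := by
  simp [muMinus_apply, hki, hkj, rhoT]

lemma abs_muPlus_left (hij : i ≠ j) : |muPlus n a i j i| = n - 1 - i + a := by
  have := i.isLt
  rw [muPlus_apply, if_pos rfl, if_neg hij, abs_of_nonneg (by omega)]
  ring

lemma abs_muPlus_right (hij : i ≠ j) : |muPlus n a i j j| = n - 1 - j + a := by
  have := j.isLt
  rw [muPlus_apply, if_neg hij.symm, if_pos rfl, abs_of_nonneg (by omega)]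
  ring

lemma abs_muMinus_left (hij : i ≠ j) : |muMinus n a i j i| = n - 1 - i + a := by
  have := i.isLt
  rw [muMinus_apply, if_pos rfl, if_neg hij, abs_of_nonneg (by omega)]
  ring

lemma abs_muMinus_right (hij : i ≠ j) (hja : (n : ℤ) - 1 - j ≤ a) :
    |muMinus n a i j j| = a + j + 1 - n := by
  rw [muMinus_apply, if_neg hij.symm, if_pos rfl, abs_of_nonpos (by omega)]
  ring

lemma abs_muPlus_injective (hij : i < j) (hja : (j : ℤ) + 1 ≤ a) :
    Function.Injective fun k => |muPlus n a i j k| := by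
  intro k m h
  have := k.isLt; have := m.isLt; have : (i : ℕ) < j := hij
  simp only [muPlus_apply, Fin.ext_iff] at h ⊢
  split_ifs at h <;> rw [abs_of_nonneg (by omega), abs_of_nonneg (by omega)] at h <;> omega

lemma prod_muPlus_pos (hj : (j : ℕ) = n - 1) (ha : 0 < a) : 0 < ∏ k, muPlus n a i j k := by
  refine prod_pos fun k _ => ?_
  have := k.isLt
  simp only [muPlus_apply, Fin.ext_iff]
  split_ifs <;> omega

lemma prod_muMinus_neg (hij : i ≠ j) (hj : (j : ℕ) = n - 1) (ha : 0 < a) :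
    ∏ k, muMinus n a i j k < 0 := by
  rw [← mul_prod_erase univ _ (mem_univ j)]
  refine mul_neg_of_neg_of_pos (by simp [muMinus_apply, hij.symm]; omega)
    (prod_pos fun k hk => ?_)
  have := k.isLt
  have hkj : (k : ℕ) ≠ j := Fin.val_ne_of_ne (ne_of_mem_erase hk)
  simp only [muMinus_apply, Fin.ext_iff]
  split_ifs <;> omega

lemma muPlus_eq_of_WDact_eq (hij : i < j) (hja : (j : ℤ) + 1 ≤ a)
    (hij' : i' < j') (hja' : (j' : ℤ) + 1 ≤ a') {g : WD n}
    (hg : WDact n g (muPlus n a' i' j') = muPlus n a i j) : a' = a ∧ i' = i ∧ j' = j := by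
  have := j.isLt; have := j'.isLt
  obtain ⟨rfl, rfl, hval⟩ := eq_of_WDact_eq (fun k => muPlus_eq_rhoT) (fun k => muPlus_eq_rhoT)
    hij hij' (by rw [abs_muPlus_left hij.ne]; omega) (by rw [abs_muPlus_right hij.ne]; omega)
    (by rw [abs_muPlus_left hij'.ne]; omega) (by rw [abs_muPlus_right hij'.ne]; omega) hg
  rw [abs_muPlus_left hij.ne, abs_muPlus_right hij.ne, abs_muPlus_left hij.ne,
    abs_muPlus_right hij.ne] at hval
  exact ⟨by omega, rfl, rfl⟩

/-- Only the case `j = n - 1` survives the comparison of absolute values; it is excluded by the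
sign of the product of the coordinates, which `W_D` preserves. -/
lemma WDact_muMinus_ne_muPlus (hij : i < j) (hja : (j : ℤ) + 1 ≤ a)
    (hij' : i' < j') (hja' : 2 * (n : ℤ) - a' ≤ j' + 1) (g : WD n) :
    WDact n g (muMinus n a' i' j') ≠ muPlus n a i j := by
  intro hg
  have := j.isLt; have := j'.isLt
  have hja_abs : (n : ℤ) - 1 - j' ≤ a' := by omega
  obtain ⟨rfl, rfl, hval⟩ := eq_of_WDact_eq (fun k => muPlus_eq_rhoT) (fun k => muMinus_eq_rhoT)
    hij hij' (by rw [abs_muPlus_left hij.ne]; omega) (by rw [abs_muPlus_right hij.ne]; omega)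
    (by rw [abs_muMinus_left hij'.ne]; omega) (by rw [abs_muMinus_right hij'.ne hja_abs]; omega) hg
  rw [abs_muPlus_left hij.ne, abs_muPlus_right hij.ne, abs_muMinus_left hij.ne,
    abs_muMinus_right hij.ne hja_abs] at hval
  have hj : (j' : ℕ) = n - 1 := by omega
  have := prod_WDact g (muMinus n a' i' j')
  rw [hg] at this
  linarith [prod_muPlus_pos (i := i') (a := a) hj (by omega),
    prod_muMinus_neg (a := a') hij.ne hj (by omega)]

lemma coeff_AtildeD_muPlus (hij : i < j) (hja : (j : ℤ) + 1 ≤ a)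
    (hij' : i' < j') (hja' : (j' : ℤ) + 1 ≤ a') :
    (AtildeD n (muPlus n a' i' j')).coeff (muPlus n a i j) =
      if a' = a ∧ i' = i ∧ j' = j then 1 else 0 := by
  split_ifs with h
  · obtain ⟨rfl, rfl, rfl⟩ := h
    exact coeff_AtildeD_self (abs_muPlus_injective hij hja)
  · exact coeff_AtildeD_eq_zero fun g hg => h (muPlus_eq_of_WDact_eq hij hja hij' hja' hg)

end Weights

lemma coeff_YD_muPlus {n a b : ℕ} {i j : Fin n} (hij : i < j)
    (hab : ((i : ℤ) + 1) + ((j : ℤ) + 1) - 2 * n = (a : ℤ) - b) (hja : (j : ℤ) + 1 ≤ a)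
    (a' b' : ℕ) : (YD n a' b').coeff (muPlus n a i j) = if (a', b') = (a, b) then 1 else 0 := by
  simp only [YD, ← muPlus.eq_1, ← muMinus.eq_1, AddMonoidAlgebra.coeff_sum,
    Finsupp.finsetSum_apply, AddMonoidAlgebra.coeff_add, Finsupp.add_apply]
  calc _ = ∑ p : Fin n × Fin n, if (a', b') = (a, b) ∧ p = (i, j) then (1 : ℤ) else 0 := by
          refine sum_congr rfl fun p _ => ?_
          rw [← add_zero (ite _ (1 : ℤ) 0)]
          congr 1
          · split
            next hP =>
              rw [coeff_AtildeD_muPlus hij hja hP.1 hP.2.2]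
              refine if_congr ⟨?_, ?_⟩ rfl rfl
              · rintro ⟨rfl, hi, hj⟩
                exact ⟨Prod.ext rfl (by omega), Prod.ext hi hj⟩
              · rintro ⟨hab', rfl⟩
                obtain ⟨rfl, rfl⟩ := Prod.mk.inj hab'
                exact ⟨rfl, rfl, rfl⟩
            next hP =>
              rw [AddMonoidAlgebra.coeff_zero, Finsupp.zero_apply, if_neg]
              rintro ⟨hab', rfl⟩
              obtain ⟨rfl, rfl⟩ := Prod.mk.inj hab'
              exact hP ⟨hij, hab, hja⟩
          · split_ifs with hM
            · exact coeff_AtildeD_eq_zero (WDact_muMinus_ne_muPlus hij hja hM.1 hM.2.2)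
            · rfl
    _ = _ := by
          by_cases h : (a', b') = (a, b) <;> simp [h]

lemma AddMonoidAlgebra.linearIndependent_of_coeff {R M ι : Type*} [Semiring R] [DecidableEq ι]
    {v : ι → AddMonoidAlgebra R M} (p : ι → M)
    (h : ∀ x y, (v x).coeff (p y) = if x = y then 1 else 0) : LinearIndependent R v := by
  refine LinearIndependent.of_comp (LinearMap.pi fun y =>
    Finsupp.lapply (p y) ∘ₗ (AddMonoidAlgebra.coeffLinearEquiv R).toLinearMap) ?_
  convert Pi.linearIndependent_single_one ι R using 1
  · funext x y
    simp [h, Pi.single_apply, eq_comm]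
  · rfl

lemma exists_plus_root {n a b : ℕ} (hab : 2 * n < a + b) (hba : 1 ≤ (b : ℤ) - a)
    (hba' : (b : ℤ) - a ≤ 2 * n - 3) :
    ∃ i j : Fin n, i < j ∧ ((i : ℤ) + 1) + ((j : ℤ) + 1) - 2 * n = (a : ℤ) - b ∧
      (j : ℤ) + 1 ≤ a := by
  set s := 2 * n - 2 - (b - a)
  refine ⟨⟨s - (s / 2 + 1), by omega⟩, ⟨s / 2 + 1, by omega⟩, Fin.mk_lt_mk.mpr (by omega), ?_, ?_⟩
  all_goals dsimp only; omega

lemma linearIndependent_YD {n : ℕ} {P : ℕ × ℕ → Prop}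
    (hP : ∀ ab, P ab →
      2 * n < ab.1 + ab.2 ∧ 1 ≤ (ab.2 : ℤ) - ab.1 ∧ (ab.2 : ℤ) - ab.1 ≤ 2 * n - 3) :
    LinearIndependent ℤ (fun x : {ab // P ab} => YD n x.1.1 x.1.2) := by
  choose i j hij hab hja using fun x : {ab // P ab} =>
    exists_plus_root (hP x.1 x.2).1 (hP x.1 x.2).2.1 (hP x.1 x.2).2.2
  refine AddMonoidAlgebra.linearIndependent_of_coeff (fun y => muPlus n y.1.1 (i y) (j y))
    fun x y => ?_
  rw [coeff_YD_muPlus (hij y) (hab y) (hja y)]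
  simp [← Subtype.ext_iff]

theorem stmt18_general (n : ℕ) :
    (∀ a b : ℕ, 1 ≤ a → 2 * n < a + b →
      1 ≤ (b : ℤ) - (a : ℤ) → (b : ℤ) - (a : ℤ) ≤ 2 * n - 3 →
      ((∃ ij : Fin n × Fin n, ij.1 < ij.2 ∧
          ((((ij.1 : ℤ) + 1) + ((ij.2 : ℤ) + 1) - 2 * n = (a : ℤ) - (b : ℤ) ∧
            (ij.2 : ℤ) + 1 ≤ (a : ℤ)) ∨
           ((ij.2 : ℤ) - (ij.1 : ℤ) = (b : ℤ) - (a : ℤ) ∧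
            2 * (n : ℤ) - (a : ℤ) ≤ (ij.2 : ℤ) + 1))) ∧
        YD n a b ≠ 0)) ∧
    LinearIndependent ℤ
      (fun x : {ab : ℕ × ℕ // 1 ≤ ab.1 ∧ 2 * n < ab.1 + ab.2 ∧
          1 ≤ (ab.2 : ℤ) - (ab.1 : ℤ) ∧ (ab.2 : ℤ) - (ab.1 : ℤ) ≤ 2 * n - 3} =>
        YD n (x : ℕ × ℕ).1 (x : ℕ × ℕ).2) := by
  refine ⟨fun a b _ hab hba hba' => ?_, linearIndependent_YD fun _ h => h.2⟩
  obtain ⟨i, j, hij, hsum, hja⟩ := exists_plus_root hab hba hba'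
  refine ⟨⟨(i, j), hij, .inl ⟨hsum, hja⟩⟩, fun hY => ?_⟩
  simpa [hY] using coeff_YD_muPlus hij hsum hja a b

/-- Lemma 5.5 of the paper.
For `n ≥ 4` and every pair of positive integers `(a, b)` with `a + b > 2n` and
`1 ≤ b − a ≤ 2n − 3`, the set `R_{a,b}` is nonempty and `Y_{a,b} ≠ 0`;
moreover, the family `{Y_{a,b}}` indexed by all such pairs is linearly
independent over `ℤ`. -/
theorem stmt18 (n : ℕ) (hn : 4 ≤ n) :
    (∀ a b : ℕ, 1 ≤ a → 2 * n < a + b →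
      1 ≤ (b : ℤ) - (a : ℤ) → (b : ℤ) - (a : ℤ) ≤ 2 * n - 3 →
      ((∃ ij : Fin n × Fin n, ij.1 < ij.2 ∧
          ((((ij.1 : ℤ) + 1) + ((ij.2 : ℤ) + 1) - 2 * n = (a : ℤ) - (b : ℤ) ∧
            (ij.2 : ℤ) + 1 ≤ (a : ℤ)) ∨
           ((ij.2 : ℤ) - (ij.1 : ℤ) = (b : ℤ) - (a : ℤ) ∧
            2 * (n : ℤ) - (a : ℤ) ≤ (ij.2 : ℤ) + 1))) ∧
        YD n a b ≠ 0)) ∧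
    LinearIndependent ℤ
      (fun x : {ab : ℕ × ℕ // 1 ≤ ab.1 ∧ 2 * n < ab.1 + ab.2 ∧
          1 ≤ (ab.2 : ℤ) - (ab.1 : ℤ) ∧ (ab.2 : ℤ) - (ab.1 : ℤ) ≤ 2 * n - 3} =>
        YD n (x : ℕ × ℕ).1 (x : ℕ × ℕ).2) :=
  stmt18_general n
end
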